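/- arXiv:1605.00995 — 3 statements merged into one kernel-verified Lean document; each statement's English description precedes it below -/
import Mathlib

section
/- Let κ_1 < ⋯ < κ_n be real, a_1, …, a_n > 0, and μ_0(x) = ∑_{j=1}^n a_j e^{κ_j x}. For k ∈ [n], the Wronskian τ_k(x) = Wr_x(μ_0, μ_0', …, μ_0^{(k−1)}) satisfies τ_k(x) = ∑_{1 ≤ i_1 < ⋯ < i_k ≤ n} (∏_{s=1}^k a_{i_s} e^{κ_{i_s} x}) · ∏_{1 ≤ r < s ≤ k} (κ_{i_s} − κ_{i_r})^2. In particular τ_k(x) > 0 for all real x. -/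
/-!
Each entry of the Wronskian matrix is a moment `∑ⱼ cⱼ κⱼ^(r+s)` with `cⱼ = aⱼ e^{κⱼ x}`, so the
matrix factors as `Vᵀ · diag c · V` with `V` the `n × k` Vandermonde matrix of the `κⱼ`. The
Cauchy–Binet formula expands its determinant over `k`-subsets `i₁ < ⋯ < iₖ`, each term being
`cᵢ₁ ⋯ cᵢₖ` times the square of a `k × k` Vandermonde determinant. All terms are positive when the
`aⱼ` are positive and the `κⱼ` increase.
-/

open Finset

section StrictMonoPerm

variable {α : Type*} [LinearOrder α] {k : ℕ}

def injectiveEquivStrictMonoProdPerm :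
    {f : Fin k → α // Function.Injective f} ≃
      {ι : Fin k → α // StrictMono ι} × Equiv.Perm (Fin k) where
  toFun f := (⟨f.1 ∘ Tuple.sort f.1,
      (Tuple.monotone_sort f.1).strictMono_of_injective (f.2.comp (Tuple.sort f.1).injective)⟩,
    (Tuple.sort f.1)⁻¹)
  invFun p := ⟨p.1.1 ∘ p.2, p.1.2.injective.comp p.2.injective⟩
  left_inv f := by ext; simp
  right_inv := by
    rintro ⟨⟨ι, hι⟩, σ⟩
    have hsorted : (ι ∘ σ) ∘ Tuple.sort (ι ∘ σ) = ι := by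
      rw [Tuple.comp_perm_comp_sort_eq_comp_sort, Tuple.sort_eq_refl_iff_monotone.2 hι.monotone]
      rfl
    have hsort : Tuple.sort (ι ∘ σ) = σ⁻¹ := by
      refine (inv_eq_of_mul_eq_one_right ?_).symm
      ext i
      exact congrArg Fin.val (hι.injective (congrFun hsorted i))
    ext <;> simp [hsort]

open scoped Classical in
theorem Fintype.sum_eq_sum_strictMono_sum_perm [Fintype α] {M : Type*} [AddCommMonoid M]
    (g : (Fin k → α) → M) (hg : ∀ f, ¬ Function.Injective f → g f = 0) :
    ∑ f, g f = ∑ ι : {ι : Fin k → α // StrictMono ι}, ∑ σ : Equiv.Perm (Fin k), g (ι.1 ∘ σ) := by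
  have hnon : ∑ f : {f : Fin k → α // ¬ Function.Injective f}, g f = 0 :=
    Fintype.sum_eq_zero _ fun f => hg f f.2
  rw [← Fintype.sum_prod_type', ← Fintype.sum_subtype_add_sum_subtype Function.Injective g, hnon,
    add_zero]
  exact Fintype.sum_equiv injectiveEquivStrictMonoProdPerm _ _ fun f =>
    congrArg (g ∘ Subtype.val) (injectiveEquivStrictMonoProdPerm.symm_apply_apply f).symm

end StrictMonoPerm

namespace Matrix

variable {R α : Type*} [CommRing R] [Fintype α] {k : ℕ}

theorem det_mul_eq_sum_fun (A : Matrix (Fin k) α R) (B : Matrix α (Fin k) R) :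
    (A * B).det = ∑ f : Fin k → α, (∏ r, A r (f r)) * (B.submatrix f id).det := by
  let D : (Fin k → R) [⋀^Fin k]→ₗ[R] R := detRowAlternating
  have hrows : A * B = of fun r => ∑ j, A r j • B j := by
    ext r s
    simp [mul_apply]
  calc (A * B).det = D fun r => ∑ j, A r j • B j := by rw [hrows]; rfl
    _ = ∑ f : Fin k → α, D fun r => A r (f r) • B (f r) :=
      D.toMultilinearMap.map_sum fun r j => A r j • B j
    _ = _ := sum_congr rfl fun f _ => D.toMultilinearMap.map_smul_univ (fun r => A r (f r)) _

open scoped Classical in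
/-- The Cauchy–Binet formula. -/
theorem det_mul_eq_sum_strictMono [LinearOrder α] (A : Matrix (Fin k) α R)
    (B : Matrix α (Fin k) R) :
    (A * B).det = ∑ ι : {ι : Fin k → α // StrictMono ι},
      (A.submatrix id ι.1).det * (B.submatrix ι.1 id).det := by
  rw [det_mul_eq_sum_fun, Fintype.sum_eq_sum_strictMono_sum_perm]
  · refine sum_congr rfl fun ι _ => ?_
    have hperm : ∀ σ : Equiv.Perm (Fin k),
        (B.submatrix (ι.1 ∘ σ) id).det = Equiv.Perm.sign σ * (B.submatrix ι.1 id).det :=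
      fun σ => det_permute σ (B.submatrix ι.1 id)
    simp_rw [hperm, ← det_transpose (A.submatrix id ι.1), det_apply', sum_mul]
    refine sum_congr rfl fun σ _ => ?_
    simp only [transpose_apply, submatrix_apply, id, Function.comp]
    ring
  · intro f hf
    obtain ⟨i, j, hfij, hij⟩ : ∃ i j, f i = f j ∧ i ≠ j := by
      simpa [Function.Injective] using hf
    rw [det_zero_of_row_eq hij (by ext; simp [hfij]), mul_zero]

open scoped Classical in
theorem det_hankel_moments_eq_sum_strictMono [LinearOrder α] (κ c : α → R) :
    (of fun r s : Fin k => ∑ j, c j * κ j ^ ((r : ℕ) + (s : ℕ))).det =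
      ∑ ι : {ι : Fin k → α // StrictMono ι},
        (∏ s, c (ι.1 s)) * ∏ r, ∏ s ∈ Ioi r, (κ (ι.1 s) - κ (ι.1 r)) ^ 2 := by
  have hfactor : (of fun r s : Fin k => ∑ j, c j * κ j ^ ((r : ℕ) + (s : ℕ))) =
      (of fun (r : Fin k) j => c j * κ j ^ (r : ℕ)) * of fun j (s : Fin k) => κ j ^ (s : ℕ) := by
    ext r s
    simp [mul_apply, pow_add, mul_assoc]
  rw [hfactor, det_mul_eq_sum_strictMono]
  refine sum_congr rfl fun ι _ => ?_
  have hA : (of fun (r : Fin k) j => c j * κ j ^ (r : ℕ)).submatrix id ι.1 =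
      of fun r s => c (ι.1 s) * (vandermonde (κ ∘ ι.1))ᵀ r s := rfl
  have hB : (of fun j (s : Fin k) => κ j ^ (s : ℕ)).submatrix ι.1 id = vandermonde (κ ∘ ι.1) :=
    rfl
  rw [hA, hB, det_mul_row, det_transpose, mul_assoc, ← sq, det_vandermonde, ← prod_pow]
  simp_rw [← prod_pow]
  rfl

end Matrix

theorem iteratedDeriv_sum_mul_exp {ι : Type*} [Fintype ι] (κ a : ι → ℝ) (m : ℕ) :
    iteratedDeriv m (fun y => ∑ j, a j * Real.exp (κ j * y)) =
      fun y => ∑ j, a j * κ j ^ m * Real.exp (κ j * y) := by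
  induction m with
  | zero => simp
  | succ m ih =>
    rw [iteratedDeriv_succ, ih]
    funext y
    refine (HasDerivAt.fun_sum fun j _ => ?_).deriv
    have hexp := ((hasDerivAt_id y).const_mul (κ j)).exp.const_mul (a j * κ j ^ m)
    exact hexp.congr_deriv (by simp only [id, mul_one]; ring)

open scoped Classical in
theorem stmt_7_general (n : ℕ) (κ a : Fin n → ℝ) (hκ : StrictMono κ) (ha : ∀ j, 0 < a j)
    (k : ℕ) (hkn : k ≤ n) (x : ℝ) :
    Matrix.det (Matrix.of fun r s : Fin k =>
        iteratedDeriv ((r : ℕ) + (s : ℕ)) (fun y => ∑ j, a j * Real.exp (κ j * y)) x) =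
        ∑ ι : {ι : Fin k → Fin n // StrictMono ι},
          (∏ s, a (ι.1 s) * Real.exp (κ (ι.1 s) * x)) *
            ∏ r, ∏ s ∈ Finset.Ioi r, (κ (ι.1 s) - κ (ι.1 r)) ^ 2 ∧
      0 < Matrix.det (Matrix.of fun r s : Fin k =>
        iteratedDeriv ((r : ℕ) + (s : ℕ)) (fun y => ∑ j, a j * Real.exp (κ j * y)) x) := by
  have hmoments : (Matrix.of fun r s : Fin k =>
      iteratedDeriv ((r : ℕ) + (s : ℕ)) (fun y => ∑ j, a j * Real.exp (κ j * y)) x) =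
      Matrix.of fun r s : Fin k =>
        ∑ j, a j * Real.exp (κ j * x) * κ j ^ ((r : ℕ) + (s : ℕ)) := by
    ext r s
    simp only [Matrix.of_apply, iteratedDeriv_sum_mul_exp]
    exact sum_congr rfl fun j _ => by ring
  have hdet := Matrix.det_hankel_moments_eq_sum_strictMono (k := k) κ
    fun j => a j * Real.exp (κ j * x)
  rw [← hmoments] at hdet
  refine ⟨hdet, hdet ▸ sum_pos (fun ι _ => mul_pos ?_ ?_) ⟨⟨Fin.castLE hkn,
    Fin.strictMono_castLE hkn⟩, mem_univ _⟩⟩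
  · exact prod_pos fun s _ => mul_pos (ha _) (Real.exp_pos _)
  · exact prod_pos fun r _ => prod_pos fun s hs => pow_pos (sub_pos.2 (hκ (ι.2 (mem_Ioi.1 hs)))) 2

open scoped Classical in
theorem stmt_7 (n : ℕ) (κ a : Fin n → ℝ) (hκ : StrictMono κ) (ha : ∀ j, 0 < a j)
    (k : ℕ) (hk1 : 1 ≤ k) (hkn : k ≤ n) (x : ℝ) :
    Matrix.det (Matrix.of fun r s : Fin k =>
        iteratedDeriv ((r : ℕ) + (s : ℕ)) (fun y => ∑ j, a j * Real.exp (κ j * y)) x) =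
        ∑ ι : {ι : Fin k → Fin n // StrictMono ι},
          (∏ s, a (ι.1 s) * Real.exp (κ (ι.1 s) * x)) *
            ∏ r, ∏ s ∈ Finset.Ioi r, (κ (ι.1 s) - κ (ι.1 r)) ^ 2 ∧
      0 < Matrix.det (Matrix.of fun r s : Fin k =>
        iteratedDeriv ((r : ℕ) + (s : ℕ)) (fun y => ∑ j, a j * Real.exp (κ j * y)) x) :=
  stmt_7_general n κ a hκ ha k hkn x
end

section
/- Let A be an n × n real tridiagonal matrix with diagonal b_1, …, b_n, superdiagonal a_1, …, a_{n−1} (all a_j ≠ 0), subdiagonal 1's. Let κ be an eigenvalue of A. Let Δ̂_k(ζ) be the leading k × k principal characteristic minor and Δ_j(ζ) the trailing j × j principal characteristic minor of ζI − A. Then for every k ∈ [0, n−1]: Δ_{n−1}(κ) · Δ̂_k(κ) = (∏_{s=1}^k a_s) · Δ_{n−k−1}(κ). -/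
noncomputable section

def tridiag (n : ℕ) (b a : ℕ → ℝ) : Matrix (Fin n) (Fin n) ℝ :=
  Matrix.of fun i j =>
    if (i : ℕ) = (j : ℕ) then b i
    else if (i : ℕ) + 1 = (j : ℕ) then a i
    else if (i : ℕ) = (j : ℕ) + 1 then 1 else 0

/-- Determinant of the leading principal `j × j` submatrix of `ζ•1 - A`. -/
def leadMinor (n : ℕ) (A : Matrix (Fin n) (Fin n) ℝ) (ζ : ℝ) (j : ℕ) (hj : j ≤ n) : ℝ :=
  ((ζ • (1 : Matrix (Fin n) (Fin n) ℝ) - A).submatrix (Fin.castLE hj) (Fin.castLE hj)).det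

/-- Determinant of the trailing principal `j × j` submatrix of `ζ•1 - A`. -/
def trailMinor (n : ℕ) (A : Matrix (Fin n) (Fin n) ℝ) (ζ : ℝ) (j : ℕ) (hj : j ≤ n) : ℝ :=
  ((ζ • (1 : Matrix (Fin n) (Fin n) ℝ) - A).submatrix
    (fun s : Fin j => ⟨n - j + (s : ℕ), by have := s.2; omega⟩)
    (fun s : Fin j => ⟨n - j + (s : ℕ), by have := s.2; omega⟩)).det

end

/-!
The leading minors `Δ̂_k` of `κ - A` obey the three-term recurrence obtained by expanding along
the last row, run forwards from `Δ̂_0 = 1`; the trailing minors obey the same recurrence, obtained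
by expanding along the first row, run backwards from the full determinant, which vanishes because
`κ` is an eigenvalue. Then `E_k = Δ_{n-1} Δ̂_k - (∏_{s<k} a_s) Δ_{n-k-1}` satisfies that
recurrence too, with `E_0 = E_1 = 0`, so it vanishes identically.
-/

open Matrix Finset

section Tridiagonal

variable {R : Type*} [CommRing R]

def tridiagonal (d u l : ℕ → R) (m : ℕ) : Matrix (Fin m) (Fin m) R :=
  Matrix.of fun i j =>
    if (i : ℕ) = j then d i
    else if (i : ℕ) + 1 = j then u i
    else if (i : ℕ) = j + 1 then l j else 0

lemma tridiagonal_apply (d u l : ℕ → R) (m : ℕ) (i j : Fin m) :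
    tridiagonal d u l m i j =
      if (i : ℕ) = j then d i
      else if (i : ℕ) + 1 = j then u i
      else if (i : ℕ) = j + 1 then l j else 0 := rfl

lemma tridiagonal_submatrix {m j : ℕ} (d u l : ℕ → R) (p : ℕ) {e f : Fin j → Fin m}
    (he : ∀ s, (e s : ℕ) = p + s) (hf : ∀ s, (f s : ℕ) = p + s) :
    (tridiagonal d u l m).submatrix e f =
      tridiagonal (fun s => d (p + s)) (fun s => u (p + s)) (fun s => l (p + s)) j := by
  ext s t
  simp only [submatrix_apply, tridiagonal_apply, he, hf]
  split_ifs <;> first | rfl | omega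

lemma det_tridiagonal_succ_succ (d u l : ℕ → R) (m : ℕ) :
    (tridiagonal d u l (m + 2)).det =
      d 0 * (tridiagonal (fun i => d (1 + i)) (fun i => u (1 + i)) (fun i => l (1 + i))
        (m + 1)).det
      - u 0 * l 0 *
        (tridiagonal (fun i => d (2 + i)) (fun i => u (2 + i)) (fun i => l (2 + i)) m).det := by
  set T := tridiagonal d u l (m + 2)
  have hsucc : ∀ {k} (s : Fin k), (s.succ : ℕ) = 1 + s := fun s => Nat.add_comm _ _
  have hminor₀ : T.submatrix Fin.succ Fin.succ =
      tridiagonal (fun i => d (1 + i)) (fun i => u (1 + i)) (fun i => l (1 + i)) (m + 1) :=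
    tridiagonal_submatrix d u l 1 hsucc hsucc
  -- the minor of the entry `u 0` has `l 0` as the only nonzero entry of its first column
  have hminor₁ : (T.submatrix Fin.succ (Fin.succAbove 1)).det =
      l 0 * (tridiagonal (fun i => d (2 + i)) (fun i => u (2 + i)) (fun i => l (2 + i)) m).det := by
    have hcol : ∀ i : Fin m, T i.succ.succ 0 = 0 := fun i => by
      simp [T, tridiagonal_apply]
    have hsub : (T.submatrix Fin.succ (Fin.succAbove 1)).submatrix Fin.succ Fin.succ =
        tridiagonal (fun i => d (2 + i)) (fun i => u (2 + i)) (fun i => l (2 + i)) m := by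
      rw [submatrix_submatrix]
      refine tridiagonal_submatrix d u l 2 (fun s => ?_) (fun s => ?_)
      · simp only [Function.comp_apply, hsucc]
        omega
      · simp only [Function.comp_apply, ← Fin.succ_zero_eq_one, Fin.succ_succAbove_succ,
          Fin.succAbove_zero, hsucc]
        omega
    rw [det_succ_column_zero, Fin.sum_univ_succ]
    simp [hcol, hsub, T, tridiagonal_apply]
  have hrow : ∀ j : Fin m, T 0 j.succ.succ = 0 := fun j => by
    simp [T, tridiagonal_apply]
  rw [det_succ_row_zero, Fin.sum_univ_succ, Fin.sum_univ_succ]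
  have h00 : T 0 0 = d 0 := by simp [T, tridiagonal_apply]
  have h01 : T 0 1 = u 0 := by simp [T, tridiagonal_apply]
  simp only [hrow, Fin.succAbove_zero, hminor₀, Fin.succ_zero_eq_one, hminor₁, h00, h01,
    mul_zero, zero_mul, sum_const_zero, add_zero, Fin.val_zero, Fin.val_one, pow_zero, pow_one]
  ring

lemma tridiagonal_submatrix_rev (d u l : ℕ → R) (m : ℕ) :
    (tridiagonal d u l m).submatrix Fin.rev Fin.rev =
      tridiagonal (fun i => d (m - 1 - i)) (fun i => l (m - 2 - i)) (fun i => u (m - 2 - i)) m := by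
  ext i j
  have := i.2; have := j.2
  simp only [submatrix_apply, tridiagonal_apply, Fin.val_rev]
  split_ifs <;> first | rfl | (congr 1; omega)

lemma det_tridiagonal_rev (d u l : ℕ → R) (m : ℕ) :
    (tridiagonal d u l m).det =
      (tridiagonal (fun i => d (m - 1 - i)) (fun i => l (m - 2 - i)) (fun i => u (m - 2 - i))
        m).det := by
  rw [← tridiagonal_submatrix_rev]
  exact (det_submatrix_equiv_self Fin.revPerm _).symm

lemma det_tridiagonal_succ_succ' (d u l : ℕ → R) (m : ℕ) :
    (tridiagonal d u l (m + 2)).det =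
      d (m + 1) * (tridiagonal d u l (m + 1)).det - u m * l m * (tridiagonal d u l m).det := by
  rw [det_tridiagonal_rev, det_tridiagonal_succ_succ, det_tridiagonal_rev d u l (m + 1),
    det_tridiagonal_rev d u l m]
  have h₁ : ∀ i, m + 2 - 1 - (1 + i) = m + 1 - 1 - i := by omega
  have h₂ : ∀ i, m + 2 - 2 - (1 + i) = m + 1 - 2 - i := by omega
  have h₃ : ∀ i, m + 2 - 1 - (2 + i) = m - 1 - i := by omega
  have h₄ : ∀ i, m + 2 - 2 - (2 + i) = m - 2 - i := by omega
  simp only [h₁, h₂, h₃, h₄, show m + 2 - 1 - 0 = m + 1 by omega,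
    show m + 2 - 2 - 0 = m by omega]
  ring

lemma det_tridiagonal_shift_succ_succ {n i : ℕ} (d u l : ℕ → R) (h : i + 2 ≤ n) :
    (tridiagonal (fun s => d (i + s)) (fun s => u (i + s)) (fun s => l (i + s)) (n - i)).det =
      d i * (tridiagonal (fun s => d (i + 1 + s)) (fun s => u (i + 1 + s)) (fun s => l (i + 1 + s))
        (n - (i + 1))).det
      - u i * l i * (tridiagonal (fun s => d (i + 2 + s)) (fun s => u (i + 2 + s))
        (fun s => l (i + 2 + s)) (n - (i + 2))).det := by
  obtain ⟨m, hm⟩ : ∃ m, n - i = m + 2 := ⟨n - i - 2, by omega⟩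
  rw [hm, show n - (i + 1) = m + 1 by omega, show n - (i + 2) = m by omega,
    det_tridiagonal_succ_succ]
  simp only [add_zero, ← add_assoc]

theorem mul_eq_prod_mul_of_recurrence {n : ℕ} {x y c a : ℕ → R}
    (hx₀ : x 0 = 1) (hx₁ : x 1 = c 0)
    (hx : ∀ k, k + 2 ≤ n → x (k + 2) = c (k + 1) * x (k + 1) - a k * x k)
    (hy₀ : y 0 = 0) (hy : ∀ i, i + 2 ≤ n → y i = c i * y (i + 1) - a i * y (i + 2)) :
    ∀ k, k + 1 ≤ n → y 1 * x k = (∏ s ∈ range k, a s) * y (k + 1)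
  | 0, _ => by simp [hx₀]
  | 1, h => by
    rw [hx₁, prod_range_one]
    linear_combination hy₀ - hy 0 h
  | k + 2, h => by
    have ih₀ := mul_eq_prod_mul_of_recurrence hx₀ hx₁ hx hy₀ hy k (by omega)
    have ih₁ := mul_eq_prod_mul_of_recurrence hx₀ hx₁ hx hy₀ hy (k + 1) (by omega)
    rw [prod_range_succ] at ih₁
    rw [prod_range_succ, prod_range_succ, hx k (by omega)]
    linear_combination c (k + 1) * ih₁ - a k * ih₀
      - (∏ s ∈ range k, a s) * a k * hy (k + 1) (by omega)

end Tridiagonal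

lemma smul_one_sub_tridiag (n : ℕ) (b a : ℕ → ℝ) (ζ : ℝ) :
    ζ • (1 : Matrix (Fin n) (Fin n) ℝ) - tridiag n b a =
      tridiagonal (fun i => ζ - b i) (fun i => -a i) (fun _ => -1) n := by
  ext i j
  simp only [Matrix.sub_apply, Matrix.smul_apply, one_apply, tridiag, of_apply, tridiagonal_apply,
    Fin.ext_iff, smul_eq_mul]
  split_ifs <;> first | omega | ring

lemma leadMinor_tridiag {n j : ℕ} (b a : ℕ → ℝ) (ζ : ℝ) (hj : j ≤ n) :
    leadMinor n (tridiag n b a) ζ j hj =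
      (tridiagonal (fun i => ζ - b i) (fun i => -a i) (fun _ => -1) j).det := by
  rw [leadMinor, smul_one_sub_tridiag,
    tridiagonal_submatrix _ _ _ 0 (e := Fin.castLE hj) (fun s => (zero_add _).symm)
      (fun s => (zero_add _).symm)]
  simp only [zero_add]

lemma trailMinor_tridiag {n j : ℕ} (b a : ℕ → ℝ) (ζ : ℝ) (hj : j ≤ n) {p : ℕ}
    (hp : p + j = n) :
    trailMinor n (tridiag n b a) ζ j hj =
      (tridiagonal (fun i => ζ - b (p + i)) (fun i => -a (p + i)) (fun _ => -1) (n - p)).det := by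
  obtain rfl : j = n - p := by omega
  rw [trailMinor, smul_one_sub_tridiag,
    tridiagonal_submatrix _ _ _ p (fun s => by simp only; omega) (fun s => by simp only; omega)]

theorem stmt_14 (n : ℕ) (b a : ℕ → ℝ) (κ : ℝ)
    (heig : (κ • (1 : Matrix (Fin n) (Fin n) ℝ) - tridiag n b a).det = 0)
    (k : ℕ) (hk : k ≤ n - 1) :
    trailMinor n (tridiag n b a) κ (n - 1) (by omega) *
        leadMinor n (tridiag n b a) κ k (by omega) =
      (∏ s ∈ Finset.range k, a s) *
        trailMinor n (tridiag n b a) κ (n - k - 1) (by omega) := by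
  have hn : 1 ≤ n := Nat.one_le_iff_ne_zero.mpr (by rintro rfl; simp at heig)
  rw [trailMinor_tridiag b a κ _ (p := 1) (by omega), leadMinor_tridiag,
    trailMinor_tridiag b a κ _ (p := k + 1) (by omega)]
  refine mul_eq_prod_mul_of_recurrence (n := n) (c := fun i => κ - b i)
    (x := fun k => (tridiagonal (fun i => κ - b i) (fun i => -a i) (fun _ => -1) k).det)
    (y := fun i => (tridiagonal (fun s => κ - b (i + s)) (fun s => -a (i + s)) (fun _ => -1)
      (n - i)).det) ?_ ?_ (fun k _ => ?_) ?_ (fun i hi => ?_) k (by omega)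
  · exact det_isEmpty
  · simp [tridiagonal_apply]
  · rw [det_tridiagonal_succ_succ']
    ring
  · simpa [smul_one_sub_tridiag] using heig
  · rw [det_tridiagonal_shift_succ_succ (fun s => κ - b s) (fun s => -a s) (fun _ => -1) hi]
    ring
end

section
/- Let n ≥ 2, fix k with 1 ≤ k ≤ n−1, and let α_1, …, α_n and α̂_1, …, α̂_n be positive reals. Then the following are equivalent: (i) for every subset I ⊆ [n] with |I| = k, ∏_{i∈I} α_i = ∏_{j∈[n]∖I} α̂_j; (ii) the product α_j α̂_j is independent of j, say α_j α̂_j = c for all j, and moreover c^k = ∏_{j=1}^n α̂_j. -/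
/-!
Multiplying condition (i) for a `k`-subset `I` by `∏_{j ∈ I} α̂_j` turns it into
`∏_{i ∈ I} α_i α̂_i = ∏_j α̂_j`: the products of `β = α α̂` over all `k`-subsets agree.
Comparing the subsets `S ∪ {i}` and `S ∪ {j}` for a `(k-1)`-subset `S` avoiding `i` and `j`
(which exists because `1 ≤ k ≤ n - 1`) gives `β_i = β_j`, so `β` is a constant `c`,
and then every such product equals `c ^ k`.
-/

open Finset

section

variable {ι M : Type*} [Fintype ι] [DecidableEq ι] [CommGroupWithZero M]

theorem prod_eq_prod_compl_iff_prod_mul_eq_prod {α αh : ι → M} (hαh : ∀ j, αh j ≠ 0)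
    (I : Finset ι) :
    ∏ i ∈ I, α i = ∏ j ∈ Iᶜ, αh j ↔ ∏ i ∈ I, α i * αh i = ∏ j, αh j := by
  rw [prod_mul_distrib, ← prod_compl_mul_prod I αh,
    mul_left_inj' (prod_ne_zero_iff.mpr fun j _ => hαh j)]

theorem apply_eq_of_forall_card_eq_prod_eq {β : ι → M} (hβ : ∀ j, β j ≠ 0) {k : ℕ}
    (hk1 : 1 ≤ k) (hk : k < Fintype.card ι) {P : M}
    (h : ∀ I : Finset ι, #I = k → ∏ i ∈ I, β i = P) (i j : ι) : β i = β j := by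
  rcases eq_or_ne i j with rfl | hij
  · rfl
  have hcard : k - 1 ≤ #({i, j}ᶜ : Finset ι) := by
    rw [card_compl, card_pair hij]
    omega
  obtain ⟨S, hS, hScard⟩ := exists_subset_card_eq hcard
  have hiS : i ∉ S := fun hi => by simpa using hS hi
  have hjS : j ∉ S := fun hj => by simpa using hS hj
  have hi := h (insert i S) (by rw [card_insert_of_notMem hiS]; omega)
  have hj := h (insert j S) (by rw [card_insert_of_notMem hjS]; omega)
  rw [prod_insert hiS] at hi
  rw [prod_insert hjS] at hj
  exact mul_right_cancel₀ (prod_ne_zero_iff.mpr fun x _ => hβ x) (hi.trans hj.symm)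

theorem forall_card_eq_prod_eq_iff {β : ι → M} (hβ : ∀ j, β j ≠ 0) {k : ℕ}
    (hk1 : 1 ≤ k) (hk : k < Fintype.card ι) {P : M} :
    (∀ I : Finset ι, #I = k → ∏ i ∈ I, β i = P) ↔ ∃ c, (∀ j, β j = c) ∧ c ^ k = P := by
  constructor
  · intro h
    obtain ⟨I, -, hI⟩ := exists_subset_card_eq (s := univ) (n := k) (by simpa using hk.le)
    obtain ⟨i0⟩ : Nonempty ι := Fintype.card_pos_iff.mp (by omega)
    have hconst := apply_eq_of_forall_card_eq_prod_eq hβ hk1 hk h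
    refine ⟨β i0, fun j => hconst j i0, ?_⟩
    rw [← h I hI, prod_eq_pow_card fun j _ => hconst j i0, hI]
  · rintro ⟨c, hc, rfl⟩ I rfl
    exact prod_eq_pow_card fun j _ => hc j

end

theorem stmt_16_general (n k : ℕ) (hk1 : 1 ≤ k) (hk : k ≤ n - 1)
    (α αh : Fin n → ℝ) (hα : ∀ j, 0 < α j) (hαh : ∀ j, 0 < αh j) :
    (∀ I : Finset (Fin n), I.card = k → ∏ i ∈ I, α i = ∏ j ∈ Iᶜ, αh j) ↔
      ∃ c : ℝ, (∀ j, α j * αh j = c) ∧ c ^ k = ∏ j, αh j := by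
  have hαh₀ : ∀ j, αh j ≠ 0 := fun j => (hαh j).ne'
  simp_rw [prod_eq_prod_compl_iff_prod_mul_eq_prod hαh₀]
  exact forall_card_eq_prod_eq_iff (fun j => mul_ne_zero (hα j).ne' (hαh₀ j)) hk1
    (by rw [Fintype.card_fin]; omega)

theorem stmt_16 (n k : ℕ) (hn : 2 ≤ n) (hk1 : 1 ≤ k) (hk : k ≤ n - 1)
    (α αh : Fin n → ℝ) (hα : ∀ j, 0 < α j) (hαh : ∀ j, 0 < αh j) :
    (∀ I : Finset (Fin n), I.card = k → ∏ i ∈ I, α i = ∏ j ∈ Iᶜ, αh j) ↔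
      ∃ c : ℝ, (∀ j, α j * αh j = c) ∧ c ^ k = ∏ j, αh j :=
  stmt_16_general n k hk1 hk α αh hα hαh
end
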